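/- arXiv:math/9210225 — 3 statements merged into one kernel-verified Lean document; each statement's English description precedes it below -/
import Mathlib

section
/- If a continuum X with more than one point admits a continuous surjection ψ : X → S¹ onto the unit circle whose point inverses ψ⁻¹(s) are all connected, then X is decomposable, i.e., X can be written as a union of two proper closed connected subsets. -/
open Set Topology

/-- Preimage of a closed connected set under a monotone (connected fibers) continuous
surjection from a compact space is connected. -/
lemma isConnected_preimage_of_fibers
    {X Y : Type*} [TopologicalSpace X] [CompactSpace X] [TopologicalSpace Y] [T2Space Y]
    {f : X → Y} (hc : Continuous f) (hs : Function.Surjective f)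
    (hfib : ∀ y : Y, IsConnected (f ⁻¹' {y}))
    {C : Set Y} (hC : IsClosed C) (hCc : IsConnected C) :
    IsConnected (f ⁻¹' C) := by
  set P := f ⁻¹' C with hP
  have hPc : IsClosed P := hC.preimage hc
  have : CompactSpace P := isCompact_iff_compactSpace.mp hPc.isCompact
  have hCspace : ConnectedSpace C := isConnected_iff_connectedSpace.mp hCc
  let g : P → C := fun x => ⟨f x.1, x.2⟩
  have hg : Continuous g := Continuous.subtype_mk (hc.comp continuous_subtype_val) _
  have hgs : Function.Surjective g := by
    rintro ⟨c, hcC⟩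
    obtain ⟨x, hx⟩ := hs c
    exact ⟨⟨x, by simp [hP, hx, hcC]⟩, Subtype.ext hx⟩
  have hclosed : IsClosedMap g := hg.isClosedMap
  have hq : Topology.IsQuotientMap g := hclosed.isQuotientMap hg hgs
  have hfg : ∀ c : C, IsConnected (g ⁻¹' {c}) := by
    rintro ⟨c, hcC⟩
    have h1 : Subtype.val '' (g ⁻¹' {(⟨c, hcC⟩ : C)}) = f ⁻¹' {c} := by
      ext x
      constructor
      · rintro ⟨⟨x, hxP⟩, hx, rfl⟩
        simpa [g, Subtype.ext_iff] using hx
      · intro hx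
        have hxP : x ∈ P := by simpa [hP] using (mem_singleton_iff.mp hx ▸ hcC : f x ∈ C)
        exact ⟨⟨x, hxP⟩, by simpa [g, Subtype.ext_iff] using hx, rfl⟩
    constructor
    · obtain ⟨x, hx⟩ := (hfib c).1
      have : x ∈ Subtype.val '' (g ⁻¹' {(⟨c, hcC⟩ : C)}) := h1 ▸ hx
      obtain ⟨y, hy, rfl⟩ := this
      exact ⟨y, hy⟩
    · refine IsInducing.subtypeVal.isPreconnected_image.mp ?_
      rw [h1]
      exact (hfib c).2
  obtain ⟨c₀⟩ : Nonempty C := ⟨⟨hCc.1.some, hCc.1.some_mem⟩⟩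
  have hmain := preimage_connectedComponent_connected hfg
    hq.isCoinducing c₀
  rw [PreconnectedSpace.connectedComponent_eq_univ, preimage_univ] at hmain
  exact isConnected_iff_connectedSpace.mpr (connectedSpace_iff_univ.mpr hmain)

/-- If a continuum with more than one point admits a continuous surjection onto the
circle with connected fibers, then it is decomposable. -/
theorem decomposable_of_monotone_map_onto_circle
    (X : Type*) [MetricSpace X] [CompactSpace X] [ConnectedSpace X] [Nontrivial X]
    (ψ : X → Circle) (hcont : Continuous ψ) (hsurj : Function.Surjective ψ)
    (hfib : ∀ s : Circle, IsConnected (ψ ⁻¹' {s})) :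
    ∃ A B : Set X, IsClosed A ∧ IsClosed B ∧ IsConnected A ∧ IsConnected B ∧
      A ≠ Set.univ ∧ B ≠ Set.univ ∧ A ∪ B = Set.univ := by
  have hpi : (0 : ℝ) ≤ Real.pi := Real.pi_pos.le
  set A₀ : Set Circle := Circle.exp '' Set.Icc 0 Real.pi with hA₀
  set B₀ : Set Circle := Circle.exp '' Set.Icc (-Real.pi) 0 with hB₀
  have hcexp : Continuous Circle.exp := Circle.exp.continuous
  have hA₀closed : IsClosed A₀ := (isCompact_Icc.image hcexp).isClosed
  have hB₀closed : IsClosed B₀ := (isCompact_Icc.image hcexp).isClosed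
  have hA₀conn : IsConnected A₀ :=
    (isConnected_Icc (by linarith)).image _ hcexp.continuousOn
  have hB₀conn : IsConnected B₀ :=
    (isConnected_Icc (by linarith)).image _ hcexp.continuousOn
  refine ⟨ψ ⁻¹' A₀, ψ ⁻¹' B₀,
    hA₀closed.preimage hcont, hB₀closed.preimage hcont,
    isConnected_preimage_of_fibers hcont hsurj hfib hA₀closed hA₀conn,
    isConnected_preimage_of_fibers hcont hsurj hfib hB₀closed hB₀conn, ?_, ?_, ?_⟩
  · -- ψ ⁻¹' A₀ ≠ univ
    obtain ⟨x, hx⟩ := hsurj (Circle.exp (-(Real.pi / 2)))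
    intro h
    have hxA : ψ x ∈ A₀ := by rw [← mem_preimage, h]; trivial
    rw [hx] at hxA
    obtain ⟨θ, hθ, hθe⟩ := hxA
    have him := congrArg (fun z : Circle => (z : ℂ).im) hθe
    simp only [Circle.coe_exp, Complex.exp_ofReal_mul_I_im] at him
    have h1 : Real.sin θ ≥ 0 := Real.sin_nonneg_of_nonneg_of_le_pi hθ.1 hθ.2
    rw [him, Real.sin_neg] at h1
    have : Real.sin (Real.pi / 2) = 1 := Real.sin_pi_div_two
    linarith
  · -- ψ ⁻¹' B₀ ≠ univ
    obtain ⟨x, hx⟩ := hsurj (Circle.exp (Real.pi / 2))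
    intro h
    have hxB : ψ x ∈ B₀ := by rw [← mem_preimage, h]; trivial
    rw [hx] at hxB
    obtain ⟨θ, hθ, hθe⟩ := hxB
    have him := congrArg (fun z : Circle => (z : ℂ).im) hθe
    simp only [Circle.coe_exp, Complex.exp_ofReal_mul_I_im] at him
    have h1 : Real.sin θ ≤ 0 := Real.sin_nonpos_of_nonpos_of_neg_pi_le hθ.2 hθ.1
    have : Real.sin (Real.pi / 2) = 1 := Real.sin_pi_div_two
    linarith
  · -- union is everything
    rw [← preimage_union, eq_univ_iff_forall]
    intro x
    simp only [mem_preimage, mem_union]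
    set s := ψ x
    have hs : Circle.exp (Complex.arg (s : ℂ)) = s := Circle.exp_arg s
    rcases le_or_gt 0 (Complex.arg (s : ℂ)) with h0 | h0
    · exact Or.inl ⟨_, ⟨h0, Complex.arg_le_pi _⟩, hs⟩
    · exact Or.inr ⟨_, ⟨(Complex.neg_pi_lt_arg _).le, h0.le⟩, hs⟩
end

section
/- An indecomposable continuum with more than one point is not arcwise connected. -/
open Set

/-- Auxiliary: contradiction from a clopen piece in a connected space. -/
lemma aux_clopen {X : Type*} [TopologicalSpace X] [ConnectedSpace X]
    {K U u v : Set X} (hKne : K.Nonempty) (hUo : IsOpen U)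
    (hcl : IsClosed (K ∪ U)) (hu : IsOpen u) (hv : IsOpen v)
    (hcov : K ∪ U ⊆ u ∪ v) (hKv : K ∩ v = ∅) (hQ : ((K ∪ U) ∩ v).Nonempty)
    (hemp : (K ∪ U) ∩ (u ∩ v) = ∅) : False := by
  have hQc : IsClosed (U ∩ v) := by
    have hcompl : (U ∩ v)ᶜ = (K ∪ U)ᶜ ∪ u := by
      ext x
      constructor
      · intro hx
        by_cases hxKU : x ∈ K ∪ U
        · rcases hcov hxKU with hxu | hxv
          · exact Or.inr hxu
          · rcases hxKU with hxK | hxU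
            · exact absurd (show x ∈ K ∩ v from ⟨hxK, hxv⟩) (by simp [hKv])
            · exact absurd ⟨hxU, hxv⟩ hx
        · exact Or.inl hxKU
      · rintro (hx | hx) ⟨hxU, hxv⟩
        · exact hx (Or.inr hxU)
        · exact absurd (show x ∈ (K ∪ U) ∩ (u ∩ v) from ⟨Or.inr hxU, hx, hxv⟩) (by simp [hemp])
    rw [← isOpen_compl_iff, hcompl]
    exact hcl.isOpen_compl.union hu
  have hclopen : IsClopen (U ∩ v) := ⟨hQc, hUo.inter hv⟩
  rcases isClopen_iff.mp hclopen with h | h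
  · obtain ⟨a, haKU, hav⟩ := hQ
    rcases haKU with haK | haU
    · exact absurd (show a ∈ K ∩ v from ⟨haK, hav⟩) (by simp [hKv])
    · exact absurd (show a ∈ U ∩ v from ⟨haU, hav⟩) (by simp [h])
  · obtain ⟨p, hp⟩ := hKne
    have : p ∈ U ∩ v := h ▸ mem_univ p
    exact absurd (show p ∈ K ∩ v from ⟨hp, this.2⟩) (by simp [hKv])

/-- If `K` is nonempty preconnected, `U` is open and `K ∪ U` is closed,
then `K ∪ U` is preconnected (in a connected space). -/
lemma union_preconnected {X : Type*} [TopologicalSpace X] [ConnectedSpace X]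
    {K U : Set X} (hK : IsPreconnected K) (hKne : K.Nonempty)
    (hUo : IsOpen U) (hcl : IsClosed (K ∪ U)) : IsPreconnected (K ∪ U) := by
  intro u v hu hv hcov hau hbv
  by_contra hemp'
  have hemp : (K ∪ U) ∩ (u ∩ v) = ∅ := not_nonempty_iff_eq_empty.mp hemp'
  by_cases hKu : (K ∩ u).Nonempty
  · by_cases hKv : (K ∩ v).Nonempty
    · obtain ⟨z, hz⟩ := hK u v hu hv (Subset.trans subset_union_left hcov) hKu hKv
      exact hemp' ⟨z, ⟨Or.inl hz.1, hz.2⟩⟩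
    · exact aux_clopen hKne hUo hcl hu hv hcov (not_nonempty_iff_eq_empty.mp hKv) hbv hemp
  · refine aux_clopen hKne hUo hcl hv hu (by rwa [union_comm v u])
      (not_nonempty_iff_eq_empty.mp hKu) hau (by rwa [inter_comm u v] at hemp)

/-- In an indecomposable continuum, every proper closed preconnected set has empty interior. -/
lemma interior_empty_of_proper {X : Type*} [TopologicalSpace X] [ConnectedSpace X]
    (hind : ¬ ∃ A B : Set X, IsClosed A ∧ IsClosed B ∧ IsConnected A ∧ IsConnected B ∧
        A ≠ Set.univ ∧ B ≠ Set.univ ∧ A ∪ B = Set.univ)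
    {K : Set X} (hKc : IsClosed K) (hK : IsPreconnected K) (hKu : K ≠ Set.univ) :
    interior K = ∅ := by
  rcases K.eq_empty_or_nonempty with hKe | hKne
  · simp [hKe]
  by_contra hint
  have hSne : Kᶜ.Nonempty := by
    rcases ne_univ_iff_exists_notMem K |>.mp hKu with ⟨z, hz⟩
    exact ⟨z, hz⟩
  have hSo : IsOpen Kᶜ := hKc.isOpen_compl
  by_cases hS : IsPreconnected Kᶜ
  · refine hind ⟨K, closure Kᶜ, hKc, isClosed_closure, ⟨hKne, hK⟩,
      ⟨hSne.mono subset_closure, hS.closure⟩, hKu, ?_, ?_⟩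
    · rw [closure_compl]
      intro h
      exact hint (compl_univ_iff.mp h)
    · apply eq_univ_of_forall
      intro x
      by_cases hx : x ∈ K
      · exact Or.inl hx
      · exact Or.inr (subset_closure hx)
  · rw [IsPreconnected] at hS
    push_neg at hS
    obtain ⟨u, v, hu, hv, hcov, hsu, hsv, hemp⟩ := hS
    have hAc : (K ∪ Kᶜ ∩ u)ᶜ = Kᶜ ∩ v := by
      ext x
      simp only [mem_compl_iff, mem_union, mem_inter_iff, not_or, not_and]
      constructor
      · rintro ⟨hxK, hxu⟩
        refine ⟨hxK, ?_⟩
        rcases hcov hxK with h | h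
        · exact absurd h (hxu hxK)
        · exact h
      · rintro ⟨hxS, hxv⟩
        refine ⟨hxS, fun _ hxu => ?_⟩
        exact absurd (show x ∈ Kᶜ ∩ (u ∩ v) from ⟨hxS, hxu, hxv⟩) (by simp [hemp])
    have hBc : (K ∪ Kᶜ ∩ v)ᶜ = Kᶜ ∩ u := by
      ext x
      simp only [mem_compl_iff, mem_union, mem_inter_iff, not_or, not_and]
      constructor
      · rintro ⟨hxK, hxv⟩
        refine ⟨hxK, ?_⟩
        rcases hcov hxK with h | h
        · exact h
        · exact absurd h (hxv hxK)
      · rintro ⟨hxS, hxu⟩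
        refine ⟨hxS, fun _ hxv => ?_⟩
        exact absurd (show x ∈ Kᶜ ∩ (u ∩ v) from ⟨hxS, hxu, hxv⟩) (by simp [hemp])
    have hAcl : IsClosed (K ∪ Kᶜ ∩ u) := by
      rw [← isOpen_compl_iff, hAc]; exact hSo.inter hv
    have hBcl : IsClosed (K ∪ Kᶜ ∩ v) := by
      rw [← isOpen_compl_iff, hBc]; exact hSo.inter hu
    refine hind ⟨K ∪ Kᶜ ∩ u, K ∪ Kᶜ ∩ v, hAcl, hBcl,
      ⟨hKne.mono subset_union_left, union_preconnected hK hKne (hSo.inter hu) hAcl⟩,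
      ⟨hKne.mono subset_union_left, union_preconnected hK hKne (hSo.inter hv) hBcl⟩,
      ?_, ?_, ?_⟩
    · intro h
      have : (K ∪ Kᶜ ∩ u)ᶜ = ∅ := by rw [h, compl_univ]
      rw [hAc] at this
      exact hsv.ne_empty this
    · intro h
      have : (K ∪ Kᶜ ∩ v)ᶜ = ∅ := by rw [h, compl_univ]
      rw [hBc] at this
      exact hsu.ne_empty this
    · apply eq_univ_of_forall
      intro x
      by_cases hx : x ∈ K
      · exact Or.inl (Or.inl hx)
      · rcases hcov hx with h | h
        · exact Or.inl (Or.inr ⟨hx, h⟩)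
        · exact Or.inr (Or.inr ⟨hx, h⟩)

/-- A connected component inside a closed subset of a compact Hausdorff space is closed. -/
lemma isClosed_connectedComponentIn' {X : Type*} [TopologicalSpace X] [CompactSpace X]
    [T2Space X] {F : Set X} (hF : IsClosed F) (p : X) :
    IsClosed (connectedComponentIn F p) := by
  by_cases hp : p ∈ F
  · rw [connectedComponentIn_eq_image hp]
    haveI : CompactSpace F := isCompact_iff_compactSpace.mp hF.isCompact
    exact (isClosed_connectedComponent.isCompact.image continuous_subtype_val).isClosed
  · rw [connectedComponentIn_eq_empty hp]
    exact isClosed_empty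

/-- The range of an injective path between two distinct points in an indecomposable
continuum is a proper subset. -/
lemma range_path_ne_univ {X : Type*} [MetricSpace X] [CompactSpace X] [ConnectedSpace X]
    (hind : ¬ ∃ A B : Set X, IsClosed A ∧ IsClosed B ∧ IsConnected A ∧ IsConnected B ∧
        A ≠ Set.univ ∧ B ≠ Set.univ ∧ A ∪ B = Set.univ)
    {x y : X} (_hxy : x ≠ y) (γ : Path x y) (hinj : Function.Injective γ) :
    Set.range ⇑γ ≠ Set.univ := by
  intro hr
  have h121 : (1/2 : ℝ) ∈ Icc (0:ℝ) 1 := by norm_num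
  refine hind ⟨γ.extend '' Icc (0:ℝ) (1/2), γ.extend '' Icc (1/2) 1,
    (isCompact_Icc.image γ.continuous_extend).isClosed,
    (isCompact_Icc.image γ.continuous_extend).isClosed,
    ⟨⟨γ.extend 0, mem_image_of_mem _ (by norm_num : (0:ℝ) ∈ Icc (0:ℝ) (1/2))⟩,
      isPreconnected_Icc.image _ γ.continuous_extend.continuousOn⟩,
    ⟨⟨γ.extend 1, mem_image_of_mem _ (by norm_num : (1:ℝ) ∈ Icc (1/2:ℝ) 1)⟩,
      isPreconnected_Icc.image _ γ.continuous_extend.continuousOn⟩, ?_, ?_, ?_⟩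
  · -- y ∉ first half
    intro h
    have hy : y ∈ γ.extend '' Icc (0:ℝ) (1/2) := h ▸ mem_univ y
    obtain ⟨t, ht, hty⟩ := hy
    have ht1 : t ∈ Icc (0:ℝ) 1 := ⟨ht.1, le_trans ht.2 (by norm_num)⟩
    rw [Path.extend_apply γ ht1] at hty
    have : γ ⟨t, ht1⟩ = γ 1 := by rw [hty, γ.target]
    have := hinj this
    have ht1' : t = 1 := congrArg Subtype.val this
    have := ht.2
    rw [ht1'] at this
    norm_num at this
  · -- x ∉ second half
    intro h
    have hx : x ∈ γ.extend '' Icc (1/2:ℝ) 1 := h ▸ mem_univ x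
    obtain ⟨t, ht, htx⟩ := hx
    have ht1 : t ∈ Icc (0:ℝ) 1 := ⟨le_trans (by norm_num) ht.1, ht.2⟩
    rw [Path.extend_apply γ ht1] at htx
    have : γ ⟨t, ht1⟩ = γ 0 := by rw [htx, γ.source]
    have := hinj this
    have ht0' : t = 0 := congrArg Subtype.val this
    have := ht.1
    rw [ht0'] at this
    norm_num at this
  · rw [← image_union, Icc_union_Icc_eq_Icc (by norm_num : (0:ℝ) ≤ 1/2) (by norm_num : (1/2:ℝ) ≤ 1)]
    rw [← hr]
    ext z
    constructor
    · rintro ⟨t, ht, rfl⟩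
      rw [Path.extend_apply γ ht]
      exact ⟨⟨t, ht⟩, rfl⟩
    · rintro ⟨s, rfl⟩
      refine ⟨s.1, s.2, ?_⟩
      rw [Path.extend_apply γ s.2]

/-- An indecomposable continuum with more than one point is not arcwise connected. -/
theorem indecomposable_not_arcwise_connected
    (X : Type*) [MetricSpace X] [CompactSpace X] [ConnectedSpace X] [Nontrivial X]
    (hind : ¬ ∃ A B : Set X, IsClosed A ∧ IsClosed B ∧ IsConnected A ∧ IsConnected B ∧
        A ≠ Set.univ ∧ B ≠ Set.univ ∧ A ∪ B = Set.univ) :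
    ¬ (∀ x y : X, x ≠ y → ∃ γ : Path x y, Function.Injective γ) := by
  intro harc
  obtain ⟨p, w, hpw⟩ := exists_pair_ne X
  haveI : Nonempty X := ⟨p⟩
  set q : ℕ → X := TopologicalSpace.denseSeq X with hq
  have hdense : DenseRange q := TopologicalSpace.denseRange_denseSeq X
  set D : ℕ × ℕ → Set X := fun nm => {x | 1/((nm.2:ℝ)+1) ≤ dist x (q nm.1)} with hD
  have hDclosed : ∀ nm, IsClosed (D nm) := fun nm =>
    isClosed_le continuous_const (continuous_id.dist continuous_const)
  set C : ℕ × ℕ → Set X := fun nm => connectedComponentIn (D nm) p with hC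
  have hCclosed : ∀ nm, IsClosed (C nm) := fun nm => isClosed_connectedComponentIn' (hDclosed nm) p
  have hCproper : ∀ nm, C nm ≠ univ := by
    intro nm h
    have hmem : q nm.1 ∈ C nm := h ▸ mem_univ _
    have hmem' : q nm.1 ∈ D nm := connectedComponentIn_subset _ _ hmem
    simp only [hD, mem_setOf_eq, dist_self] at hmem'
    have : (0:ℝ) < 1/((nm.2:ℝ)+1) := by positivity
    linarith
  have hCint : ∀ nm, interior (C nm) = ∅ := fun nm =>
    interior_empty_of_proper hind (hCclosed nm) isPreconnected_connectedComponentIn (hCproper nm)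
  have hcover : (⋃ nm, C nm) = univ := by
    apply eq_univ_of_forall
    intro x
    have key : ∃ K : Set X, IsClosed K ∧ IsPreconnected K ∧ p ∈ K ∧ x ∈ K ∧ K ≠ univ := by
      by_cases hx : x = p
      · obtain ⟨γ, hinj⟩ := harc p w hpw
        refine ⟨Set.range ⇑γ, (isCompact_range γ.continuous).isClosed,
          isPreconnected_range γ.continuous, ⟨0, γ.source⟩, ?_,
          range_path_ne_univ hind hpw γ hinj⟩
        rw [hx]
        exact ⟨0, γ.source⟩
      · obtain ⟨γ, hinj⟩ := harc p x (Ne.symm hx)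
        exact ⟨Set.range ⇑γ, (isCompact_range γ.continuous).isClosed,
          isPreconnected_range γ.continuous, ⟨0, γ.source⟩, ⟨1, γ.target⟩,
          range_path_ne_univ hind (Ne.symm hx) γ hinj⟩
    obtain ⟨K, hKc, hKpre, hpK, hxK, hKu⟩ := key
    obtain ⟨z, hz⟩ := (ne_univ_iff_exists_notMem K).mp hKu
    obtain ⟨ε, hε, hball⟩ := Metric.isOpen_iff.mp hKc.isOpen_compl z hz
    obtain ⟨n, hn⟩ := hdense.exists_dist_lt z (half_pos hε)
    obtain ⟨m, hm⟩ := exists_nat_one_div_lt (half_pos hε)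
    have hKD : K ⊆ D (n, m) := by
      intro k hk
      simp only [hD, mem_setOf_eq]
      by_contra hlt
      push_neg at hlt
      have hdz : dist k z ≤ dist k (q n) + dist (q n) z := dist_triangle k (q n) z
      have : dist k z < ε := by
        have h1 : dist k (q n) < ε/2 := lt_trans hlt hm
        have h2 : dist (q n) z < ε/2 := by rwa [dist_comm]
        linarith
      exact hball (Metric.mem_ball.mpr this) hk
    exact mem_iUnion.mpr ⟨(n, m), hKpre.subset_connectedComponentIn hpK hKD hxK⟩
  obtain ⟨nm, hnm⟩ := nonempty_interior_of_iUnion_of_closed hCclosed hcover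
  rw [hCint nm] at hnm
  exact (not_nonempty_empty hnm).elim
end

section
/- If X ⊆ ℂ is an indecomposable continuum, then X has empty interior in ℂ. -/
open Complex Metric Set Real


/-- Separation helper: if `F` lies on one side of a closed separation of `X \ H`,
we get a contradiction with connectedness of `X`. -/
lemma key_sep {X H F u v : Set ℂ} (hXcl : IsClosed X) (hX : IsPreconnected X)
    (hH : IsOpen H) (hFne : F.Nonempty) (hFA : F ⊆ X \ H) (hcl : closure H ⊆ H ∪ F)
    (hu : IsClosed u) (hv : IsClosed v) (huv : X \ H ⊆ u ∪ v)
    (hvne : ((X \ H) ∩ v).Nonempty) (hFu : F ⊆ u)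
    (hempty : (X \ H) ∩ (u ∩ v) = ∅) : False := by
  have hAcl : IsClosed (X \ H) := hXcl.sdiff hH
  have h1 : IsClosed ((u ∩ (X \ H)) ∪ closure H) := (hu.inter hAcl).union isClosed_closure
  have h2 : IsClosed (v ∩ (X \ H)) := hv.inter hAcl
  have hcov : X ⊆ (u ∩ (X \ H) ∪ closure H) ∪ v ∩ (X \ H) := by
    intro x hx
    by_cases hxH : x ∈ H
    · exact Or.inl (Or.inr (subset_closure hxH))
    · rcases huv ⟨hx, hxH⟩ with h | h
      · exact Or.inl (Or.inl ⟨h, hx, hxH⟩)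
      · exact Or.inr ⟨h, hx, hxH⟩
  have hne1 : (X ∩ ((u ∩ (X \ H)) ∪ closure H)).Nonempty := by
    obtain ⟨p, hp⟩ := hFne
    exact ⟨p, (hFA hp).1, Or.inl ⟨hFu hp, hFA hp⟩⟩
  have hne2 : (X ∩ (v ∩ (X \ H))).Nonempty := by
    obtain ⟨p, hpA, hpv⟩ := hvne
    exact ⟨p, hpA.1, hpv, hpA⟩
  obtain ⟨p, _, hp1, hp2⟩ := isPreconnected_closed_iff.mp hX _ _ h1 h2 hcov hne1 hne2
  have hpA : p ∈ X \ H := hp2.2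
  have hpu : p ∈ u := by
    rcases hp1 with h | h
    · exact h.1
    · rcases hcl h with h' | h'
      · exact absurd h' hpA.2
      · exact hFu h'
  exact absurd (Set.eq_empty_iff_forall_notMem.mp hempty p) (by exact fun h => h ⟨hpA, hpu, hp2.1⟩)

/-- If `F` is a connected "fence" containing the topological boundary of an open `H`,
with `F ⊆ X \ H`, then `X \ H` is connected. -/
lemma compl_open_connected {X H F : Set ℂ} (hXcl : IsClosed X) (hX : IsPreconnected X)
    (hH : IsOpen H) (hF : IsPreconnected F) (hFne : F.Nonempty)
    (hFA : F ⊆ X \ H) (hcl : closure H ⊆ H ∪ F) :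
    IsConnected (X \ H) := by
  refine ⟨hFne.mono hFA, ?_⟩
  rw [isPreconnected_closed_iff]
  intro u v hu hv huv hune hvne
  by_contra hcon
  have hempty : (X \ H) ∩ (u ∩ v) = ∅ := Set.not_nonempty_iff_eq_empty.mp hcon
  have hFuv : F ⊆ u ∪ v := hFA.trans huv
  have : F ⊆ u ∨ F ⊆ v := by
    by_contra hnot
    push_neg at hnot
    obtain ⟨hnu, hnv⟩ := hnot
    have h1 : (F ∩ u).Nonempty ∧ (F ∩ v).Nonempty ∨ F ⊆ u ∨ F ⊆ v := by
      by_cases e1 : (F ∩ u).Nonempty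
      · by_cases e2 : (F ∩ v).Nonempty
        · exact Or.inl ⟨e1, e2⟩
        · refine Or.inr (Or.inl fun x hx => ?_)
          rcases hFuv hx with h | h
          · exact h
          · exact absurd ⟨x, hx, h⟩ e2
      · refine Or.inr (Or.inr fun x hx => ?_)
        rcases hFuv hx with h | h
        · exact absurd ⟨x, hx, h⟩ e1
        · exact h
    rcases h1 with ⟨e1, e2⟩ | h | h
    · obtain ⟨p, hpF, hpu, hpv⟩ := isPreconnected_closed_iff.mp hF u v hu hv hFuv e1 e2
      exact absurd (Set.eq_empty_iff_forall_notMem.mp hempty p)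
        (fun h => h ⟨hFA hpF, hpu, hpv⟩)
    · exact hnu h
    · exact hnv h
  rcases this with hFu | hFv
  · exact absurd (key_sep hXcl hX hH hFne hFA hcl hu hv huv hvne hFu hempty) not_false
  · have hempty' : (X \ H) ∩ (v ∩ u) = ∅ := by rwa [Set.inter_comm u v] at hempty
    exact absurd (key_sep hXcl hX hH hFne hFA hcl hv hu (by rwa [Set.union_comm u v] at huv)
      hune hFv hempty') not_false


lemma semicircle_connected (c : ℂ) (r ε : ℝ) (hr : 0 < r) (hε : ε = 1 ∨ ε = -1) :
    IsConnected {z : ℂ | ‖z - c‖ = r ∧ 0 ≤ ε * (z - c).re} := by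
  have hε2 : ε * ε = 1 := by rcases hε with h | h <;> simp [h]
  have himg : (fun θ : ℝ => c + (ε : ℂ) * (r : ℂ) * Complex.exp (θ * Complex.I)) ''
      (Icc (-(π/2)) (π/2)) = {z : ℂ | ‖z - c‖ = r ∧ 0 ≤ ε * (z - c).re} := by
    ext z
    constructor
    · rintro ⟨θ, hθ, rfl⟩
      have h1 : c + (ε : ℂ) * (r : ℂ) * Complex.exp (θ * Complex.I) - c
          = (ε : ℂ) * (r : ℂ) * Complex.exp (θ * Complex.I) := by ring
      constructor
      · rw [h1]
        simp only [norm_mul, Complex.norm_exp_ofReal_mul_I, Complex.norm_real]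
        rcases hε with h | h <;> simp [h, abs_of_pos hr]
      · rw [h1]
        have hre : ((ε : ℂ) * (r : ℂ) * Complex.exp (θ * Complex.I)).re
            = ε * r * Real.cos θ := by
          rw [mul_assoc, Complex.re_ofReal_mul, Complex.re_ofReal_mul,
            Complex.exp_ofReal_mul_I_re, ← mul_assoc]
        rw [hre]
        have hcos : 0 ≤ Real.cos θ := Real.cos_nonneg_of_mem_Icc hθ
        nlinarith [mul_nonneg hr.le hcos]
    · rintro ⟨habs, hre⟩
      set w : ℂ := (ε : ℂ) * (z - c) with hw
      have hwabs : ‖w‖ = r := by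
        rw [hw, norm_mul, Complex.norm_real]
        rcases hε with h | h <;> simp [h, habs]
      have hwne : w ≠ 0 := by
        intro h
        rw [h, norm_zero] at hwabs
        exact hr.ne hwabs
      have hwre : 0 ≤ w.re := by
        rw [hw, Complex.re_ofReal_mul]
        exact hre
      refine ⟨Complex.arg w, ?_, ?_⟩
      · exact abs_le.mp (Complex.abs_arg_le_pi_div_two_iff.mpr hwre)
      · have hwexp : (‖w‖ : ℂ) * Complex.exp (Complex.arg w * Complex.I) = w :=
          Complex.norm_mul_exp_arg_mul_I w
        rw [hwabs] at hwexp
        have : (ε : ℂ) * w = z - c := by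
          rw [hw, ← mul_assoc, ← Complex.ofReal_mul, hε2]
          simp
        simp only []
        rw [mul_assoc, hwexp, this]
        ring
  rw [← himg]
  exact (isConnected_Icc (by linarith [Real.pi_pos] : -(π/2) ≤ π/2)).image _
    (Continuous.continuousOn (by continuity))

lemma half_disk_compl_connected (X : Set ℂ) (hXcl : IsClosed X) (hX : IsPreconnected X)
    (c : ℂ) (r ε : ℝ) (hr : 0 < r) (hε : ε = 1 ∨ ε = -1)
    (hball : Metric.closedBall c r ⊆ X) :
    IsConnected (X \ {z : ℂ | dist z c < r ∧ 0 < ε * (z - c).re}) := by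
  have hεne : ε ≠ 0 := by rcases hε with h | h <;> simp [h]
  set S : Set ℂ := {z : ℂ | ‖z - c‖ = r ∧ 0 ≤ ε * (z - c).re} with hS
  set D : Set ℂ := {z : ℂ | (z - c).re = 0 ∧ ‖z - c‖ ≤ r} with hD
  set F : Set ℂ := S ∪ D with hF
  set H : Set ℂ := {z : ℂ | dist z c < r ∧ 0 < ε * (z - c).re} with hH
  have hreC : Continuous fun z : ℂ => ε * (z - c).re :=
    continuous_const.mul (Complex.continuous_re.comp (continuous_id.sub continuous_const))
  have hHopen : IsOpen H := by
    have : H = Metric.ball c r ∩ {z : ℂ | 0 < ε * (z - c).re} := by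
      ext z; simp [hH, Metric.mem_ball]
    rw [this]
    exact Metric.isOpen_ball.inter (isOpen_lt continuous_const hreC)
  -- F is preconnected
  have hp : (c + (r : ℂ) * Complex.I) ∈ S ∩ D := by
    constructor
    · constructor
      · simp [abs_of_pos hr]
      · simp
    · constructor
      · simp
      · simp [abs_of_pos hr]
  have hDconv : Convex ℝ D := by
    have : D = {z : ℂ | (z - c).re = 0} ∩ Metric.closedBall c r := by
      ext z; simp [hD, Metric.mem_closedBall, Complex.dist_eq]
    rw [this]
    refine Convex.inter ?_ (convex_closedBall c r)
    have heq : {z : ℂ | (z - c).re = 0} = Complex.reLm ⁻¹' {c.re} := by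
      ext z; simp [Complex.sub_re, sub_eq_zero]
    rw [heq]
    exact (convex_singleton c.re).linear_preimage Complex.reLm
  have hFpre : IsPreconnected F :=
    (semicircle_connected c r ε hr hε).2.union (c + (r : ℂ) * Complex.I) hp.1 hp.2
      hDconv.isPreconnected
  have hFne : F.Nonempty := ⟨c + (r : ℂ) * Complex.I, Or.inl hp.1⟩
  have hFX : F ⊆ X := by
    rintro z (⟨h1, _⟩ | ⟨_, h2⟩)
    · exact hball (by simp [Metric.mem_closedBall, Complex.dist_eq, h1])
    · exact hball (by simp [Metric.mem_closedBall, Complex.dist_eq, h2])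
  have hFA : F ⊆ X \ H := by
    rintro z hz
    refine ⟨hFX hz, ?_⟩
    rcases hz with ⟨h1, _⟩ | ⟨h2, _⟩
    · rintro ⟨hd, _⟩
      rw [Complex.dist_eq, h1] at hd
      exact lt_irrefl r hd
    · rintro ⟨_, hpos⟩
      rw [h2, mul_zero] at hpos
      exact lt_irrefl 0 hpos
  have hcl : closure H ⊆ H ∪ F := by
    have hsub : closure H ⊆ Metric.closedBall c r ∩ {z : ℂ | 0 ≤ ε * (z - c).re} := by
      refine closure_minimal ?_ ((Metric.isClosed_closedBall).inter (isClosed_le continuous_const hreC))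
      rintro z ⟨h1, h2⟩
      exact ⟨Metric.mem_closedBall.mpr h1.le, h2.le⟩
    intro z hz
    obtain ⟨h1, h2⟩ := hsub hz
    rw [Metric.mem_closedBall] at h1
    by_cases hd : dist z c < r
    · by_cases hre : 0 < ε * (z - c).re
      · exact Or.inl ⟨hd, hre⟩
      · have hre0 : (z - c).re = 0 := by
          simp only [mem_setOf_eq] at h2
          have h0 : ε * (z - c).re = 0 := le_antisymm (not_lt.mp hre) h2
          exact (mul_eq_zero.mp h0).resolve_left hεne
        exact Or.inr (Or.inr ⟨hre0, by rw [← Complex.dist_eq]; exact hd.le⟩)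
    · have habs : ‖z - c‖ = r := by
        rw [← Complex.dist_eq]; exact le_antisymm h1 (not_lt.mp hd)
      exact Or.inr (Or.inl ⟨habs, h2⟩)
  exact compl_open_connected hXcl hX hHopen hFpre hFne hFA hcl


/-- An indecomposable continuum in ℂ has empty interior. -/
theorem indecomposable_planar_continuum_empty_interior
    (X : Set ℂ) (hne : X.Nonempty) (hcomp : IsCompact X) (hconn : IsConnected X)
    (hind : ¬ ∃ A B : Set ℂ, A ⊆ X ∧ B ⊆ X ∧ IsClosed A ∧ IsClosed B ∧
        IsConnected A ∧ IsConnected B ∧ A ≠ X ∧ B ≠ X ∧ A ∪ B = X) :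
    interior X = ∅ := by
  by_contra h
  obtain ⟨c, hc⟩ := Set.nonempty_iff_ne_empty.mpr h
  obtain ⟨δ, hδ, hball⟩ := Metric.isOpen_iff.mp isOpen_interior c hc
  set r : ℝ := δ / 2 with hrdef
  have hr : 0 < r := by positivity
  have hcb : Metric.closedBall c r ⊆ X :=
    (Metric.closedBall_subset_ball (by rw [hrdef]; linarith)).trans
      (hball.trans interior_subset)
  have hop : ∀ ε' : ℝ, IsOpen {z : ℂ | dist z c < r ∧ 0 < ε' * (z - c).re} := by
    intro ε'
    have heq : {z : ℂ | dist z c < r ∧ 0 < ε' * (z - c).re}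
        = Metric.ball c r ∩ {z : ℂ | 0 < ε' * (z - c).re} := by
      ext z; simp [Metric.mem_ball]
    rw [heq]
    exact Metric.isOpen_ball.inter (isOpen_lt continuous_const
      (continuous_const.mul (Complex.continuous_re.comp (continuous_id.sub continuous_const))))
  apply hind
  refine ⟨X \ {z : ℂ | dist z c < r ∧ 0 < 1 * (z - c).re},
    X \ {z : ℂ | dist z c < r ∧ 0 < (-1) * (z - c).re},
    Set.diff_subset, Set.diff_subset,
    hcomp.isClosed.sdiff (hop 1), hcomp.isClosed.sdiff (hop (-1)),
    half_disk_compl_connected X hcomp.isClosed hconn.2 c r 1 hr (Or.inl rfl) hcb,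
    half_disk_compl_connected X hcomp.isClosed hconn.2 c r (-1) hr (Or.inr rfl) hcb,
    ?_, ?_, ?_⟩
  · intro hA
    have hz : (c + (r/2 : ℝ)) ∈ {z : ℂ | dist z c < r ∧ 0 < 1 * (z - c).re} := by
      constructor
      · simp only [Complex.dist_eq, add_sub_cancel_left, norm_neg, Complex.norm_real, Real.norm_eq_abs]
        rw [abs_of_pos (by positivity)]
        linarith
      · simp only [add_sub_cancel_left, Complex.ofReal_re, one_mul, mem_setOf_eq]
        positivity
    have hzX : (c + (r/2 : ℝ)) ∈ X := hcb (by
      simp only [Metric.mem_closedBall, Complex.dist_eq, add_sub_cancel_left,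
        norm_neg, Complex.norm_real, Real.norm_eq_abs]
      rw [abs_of_pos (by positivity)]
      linarith)
    rw [← hA] at hzX
    exact hzX.2 hz
  · intro hB
    have hz : (c - (r/2 : ℝ)) ∈ {z : ℂ | dist z c < r ∧ 0 < (-1) * (z - c).re} := by
      constructor
      · simp only [Complex.dist_eq, sub_sub_cancel_left, map_neg_eq_map, norm_neg, Complex.norm_real, Real.norm_eq_abs]
        rw [abs_of_pos (by positivity)]
        linarith
      · simp only [sub_sub_cancel_left, Complex.neg_re, Complex.ofReal_re, mem_setOf_eq]
        nlinarith
    have hzX : (c - (r/2 : ℝ)) ∈ X := hcb (by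
      simp only [Metric.mem_closedBall, Complex.dist_eq, sub_sub_cancel_left,
        map_neg_eq_map, norm_neg, Complex.norm_real, Real.norm_eq_abs]
      rw [abs_of_pos (by positivity)]
      linarith)
    rw [← hB] at hzX
    exact hzX.2 hz
  · ext z
    constructor
    · rintro (hz | hz) <;> exact hz.1
    · intro hz
      by_cases hp : z ∈ {z : ℂ | dist z c < r ∧ 0 < 1 * (z - c).re}
      · refine Or.inr ⟨hz, ?_⟩
        rintro ⟨_, hneg⟩
        have := hp.2
        nlinarith
      · exact Or.inl ⟨hz, hp⟩
end
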